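/- Let B, β, μ, d, α > 0, let E₁, E₂, E₃ ∈ (0,1] with S₀* = B/μ, and let S₁*, I₁* > 0 satisfy S₁* = (B + αE₃ I₁*)/(μ + βE₁G(I₁*)) and βE₁E₂ S₁* G(I₁*) = (μ+d+α)I₁*, where G satisfies G(0)=0, increasing, and G(x) ≤ x. If S₁* ≤ S₀*, then BβE₁G(I₁*) − μαE₃ I₁* ≥ μ(μ+d+α)(S₀* − S₁*)I₁*/(E₂ S₁*) > 0 whenever S₀* > S₁*; consequently S₁* < B/(μ + βI₁* q) for every q ∈ (0, q̄), where q̄ = (BβE₁G(I₁*) − μαE₃ I₁*)/((B + αE₃ I₁*)βI₁*). -/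

import Mathlib

/-!
Clearing the denominator in the equilibrium equation for `S₁*` gives the identity
`BβE₁G(I₁*) − μαE₃I₁* = μ(S₀* − S₁*)(βE₁G(I₁*) + μ)`, which is the whole argument: the factor
`βE₁G(I₁*)` equals `(μ+d+α)I₁*/(E₂S₁*)` by the equation for `I₁*`, giving the lower bound, and
dividing by `(B + αE₃I₁*)βI₁* = S₁*(μ + βE₁G(I₁*))βI₁*` turns `q < q̄` into `qβI₁*S₁* < B − μS₁*`.
-/

lemma MonotoneOn.nonneg_of_map_zero {G : ℝ → ℝ} (hG0 : G 0 = 0)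
    (hG : MonotoneOn G (Set.Ici 0)) {x : ℝ} (hx : 0 ≤ x) : 0 ≤ G x :=
  hG0 ▸ hG (Set.mem_Ici.2 le_rfl) hx hx

lemma margin_eq_of_mul_add_eq {B μ S c a : ℝ} (h : S * (μ + c) = B + a) :
    B * c - μ * a = (B - μ * S) * (c + μ) := by
  linear_combination μ * h

lemma div_le_margin_and_margin_pos {μ k S₀ S c E I M : ℝ} (hμ : 0 < μ) (hE : 0 < E)
    (hS : 0 < S) (hc : 0 ≤ c) (hlt : S < S₀) (hM : M = μ * (S₀ - S) * (c + μ))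
    (hcES : c * E * S = k * I) :
    μ * k * (S₀ - S) * I / (E * S) ≤ M ∧ 0 < M := by
  have hgap : 0 < μ * (S₀ - S) := mul_pos hμ (sub_pos.2 hlt)
  have hlhs : μ * k * (S₀ - S) * I / (E * S) = μ * (S₀ - S) * c := by
    rw [div_eq_iff (by positivity)]
    linear_combination -(μ * (S₀ - S)) * hcES
  refine ⟨?_, hM ▸ by positivity⟩
  rw [hlhs, hM]
  exact mul_le_mul_of_nonneg_left (by linarith) hgap.le

lemma lt_div_of_lt_margin_div {B μ β I q S c M : ℝ} (hμ : 0 < μ) (hβ : 0 < β) (hI : 0 < I)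
    (hq : 0 < q) (hS : 0 < S) (hc : 0 ≤ c) (hM : M = (B - μ * S) * (c + μ))
    (hqM : q < M / (S * (μ + c) * β * I)) :
    S < B / (μ + β * I * q) := by
  have hbound : q * β * I * S < B - μ * S := by
    rw [hM, lt_div_iff₀ (by positivity)] at hqM
    have hc' : 0 < μ + c := by positivity
    nlinarith
  rw [lt_div_iff₀ (by positivity)]
  linarith

theorem stmt15_general (B β μ d α E₁ E₂ E₃ S₀ S₁ I₁ : ℝ) (G : ℝ → ℝ)
    (hβ : 0 < β) (hμ : 0 < μ)
    (hE₁ : E₁ ∈ Set.Ioc (0:ℝ) 1) (hE₂ : E₂ ∈ Set.Ioc (0:ℝ) 1)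
    (hS₀ : S₀ = B / μ) (hS₁ : 0 < S₁) (hI₁ : 0 < I₁)
    (hG0 : G 0 = 0) (hGmono : MonotoneOn G (Set.Ici 0))
    (heq1 : S₁ = (B + α * E₃ * I₁) / (μ + β * E₁ * G I₁))
    (heq2 : β * E₁ * E₂ * S₁ * G I₁ = (μ + d + α) * I₁) :
    (S₁ < S₀ →
      μ * (μ + d + α) * (S₀ - S₁) * I₁ / (E₂ * S₁) ≤ B * β * E₁ * G I₁ - μ * α * E₃ * I₁ ∧
      0 < B * β * E₁ * G I₁ - μ * α * E₃ * I₁) ∧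
    (∀ q : ℝ, 0 < q →
      q < (B * β * E₁ * G I₁ - μ * α * E₃ * I₁) / ((B + α * E₃ * I₁) * β * I₁) →
      S₁ < B / (μ + β * I₁ * q)) := by
  have hc : 0 ≤ β * E₁ * G I₁ :=
    mul_nonneg (mul_pos hβ hE₁.1).le (hGmono.nonneg_of_map_zero hG0 hI₁.le)
  have hclear : S₁ * (μ + β * E₁ * G I₁) = B + α * E₃ * I₁ :=
    (eq_div_iff (by positivity)).1 heq1
  have hkey : B * β * E₁ * G I₁ - μ * α * E₃ * I₁
      = (B - μ * S₁) * (β * E₁ * G I₁ + μ) := by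
    rw [← margin_eq_of_mul_add_eq hclear]; ring
  have hB : B = μ * S₀ := by rw [hS₀, mul_div_cancel₀ _ hμ.ne']
  refine ⟨fun hlt => div_le_margin_and_margin_pos hμ hE₂.1 hS₁ hc hlt ?_ ?_,
    fun q hq hqM => lt_div_of_lt_margin_div hμ hβ hI₁ hq hS₁ hc hkey ?_⟩
  · rw [hkey, hB]; ring
  · linear_combination heq2
  · rwa [← hclear] at hqM

theorem stmt15 (B β μ d α E₁ E₂ E₃ S₀ S₁ I₁ : ℝ) (G : ℝ → ℝ)
    (hB : 0 < B) (hβ : 0 < β) (hμ : 0 < μ) (hd : 0 < d) (hα : 0 < α)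
    (hE₁ : E₁ ∈ Set.Ioc (0:ℝ) 1) (hE₂ : E₂ ∈ Set.Ioc (0:ℝ) 1)
    (hE₃ : E₃ ∈ Set.Ioc (0:ℝ) 1)
    (hS₀ : S₀ = B / μ) (hS₁ : 0 < S₁) (hI₁ : 0 < I₁)
    (hG0 : G 0 = 0) (hGmono : MonotoneOn G (Set.Ici 0))
    (hGle : ∀ x ≥ (0:ℝ), G x ≤ x)
    (heq1 : S₁ = (B + α * E₃ * I₁) / (μ + β * E₁ * G I₁))
    (heq2 : β * E₁ * E₂ * S₁ * G I₁ = (μ + d + α) * I₁)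
    (hle : S₁ ≤ S₀) :
    (S₁ < S₀ →
      μ * (μ + d + α) * (S₀ - S₁) * I₁ / (E₂ * S₁) ≤ B * β * E₁ * G I₁ - μ * α * E₃ * I₁ ∧
      0 < B * β * E₁ * G I₁ - μ * α * E₃ * I₁) ∧
    (∀ q : ℝ, 0 < q →
      q < (B * β * E₁ * G I₁ - μ * α * E₃ * I₁) / ((B + α * E₃ * I₁) * β * I₁) →
      S₁ < B / (μ + β * I₁ * q)) :=
  stmt15_general B β μ d α E₁ E₂ E₃ S₀ S₁ I₁ G hβ hμ hE₁ hE₂ hS₀ hS₁ hI₁ hG0 hGmono heq1 heq2
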